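/- arXiv:math-ph/0006005 — 8 statements merged into one kernel-verified Lean document; each statement's English description precedes it below -/
import Mathlib

section
/- For integers a ≠ b and real exponents α, β > 1, there exists a constant C (depending only on α, β) such that the sum over j ∈ ℤ \ {a, b} of 1/(|j-a|^α · |j-b|^β) is at most C / |a-b|^min(α,β). -/
open Real

private lemma key_bound (α β : ℝ) (hα : 1 < α) (hβ : 1 < β) {x y d : ℝ}
    (hx : 1 ≤ x) (hy : 1 ≤ y) (hd : 1 ≤ d) (hxy : d ≤ x + y) :
    1 / (x ^ α * y ^ β) ≤
      2 ^ max α β / d ^ min α β * (1 / x ^ α + 1 / y ^ β) := by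
  have hx0 : (0:ℝ) < x := lt_of_lt_of_le one_pos hx
  have hy0 : (0:ℝ) < y := lt_of_lt_of_le one_pos hy
  have hd0 : (0:ℝ) < d := lt_of_lt_of_le one_pos hd
  have hα0 : 0 ≤ α := by linarith
  have hβ0 : 0 ≤ β := by linarith
  have hdenpos : (0:ℝ) < d ^ min α β / 2 ^ max α β := by positivity
  have hkey : ∀ γ : ℝ, min α β ≤ γ → γ ≤ max α β → ∀ z : ℝ, d / 2 ≤ z → 1 ≤ z →
      1 / z ^ γ ≤ 2 ^ max α β / d ^ min α β := by
    intro γ h1 h2 z hz hz1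
    have hz0 : (0:ℝ) < z := lt_of_lt_of_le one_pos hz1
    have hγ0 : 0 ≤ γ := le_trans (le_min hα0 hβ0) h1
    have h3 : d ^ min α β / 2 ^ max α β ≤ z ^ γ := by
      have hz1γ : (1:ℝ) ≤ z ^ γ := by
        have := Real.rpow_le_rpow zero_le_one hz1 hγ0
        rwa [Real.one_rpow] at this
      rcases le_or_gt d 2 with hd2 | hd2
      · have h4 : d ^ min α β ≤ 2 ^ max α β := by
          calc d ^ min α β ≤ 2 ^ min α β :=
                Real.rpow_le_rpow (by positivity) hd2 (by positivity)
            _ ≤ 2 ^ max α β := Real.rpow_le_rpow_of_exponent_le one_le_two min_le_max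
        calc d ^ min α β / 2 ^ max α β ≤ 1 := by
              rw [div_le_one (by positivity)]; exact h4
          _ ≤ z ^ γ := hz1γ
      · have hA : d ^ min α β ≤ d ^ γ := Real.rpow_le_rpow_of_exponent_le hd h1
        have hB : (2:ℝ) ^ γ ≤ 2 ^ max α β :=
          Real.rpow_le_rpow_of_exponent_le one_le_two h2
        calc d ^ min α β / 2 ^ max α β ≤ d ^ γ / 2 ^ γ :=
              div_le_div₀ (by positivity) hA (by positivity) hB
          _ = (d / 2) ^ γ := (Real.div_rpow hd0.le (by norm_num : (0:ℝ) ≤ 2) γ).symm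
          _ ≤ z ^ γ := Real.rpow_le_rpow (by positivity) hz hγ0
    calc 1 / z ^ γ ≤ 1 / (d ^ min α β / 2 ^ max α β) :=
          one_div_le_one_div_of_le hdenpos h3
      _ = 2 ^ max α β / d ^ min α β := by rw [one_div_div]
  rcases le_or_gt (d / 2) x with hcx | hcx
  · have h1 : 1 / x ^ α ≤ 2 ^ max α β / d ^ min α β :=
      hkey α (min_le_left _ _) (le_max_left _ _) x hcx hx
    calc 1 / (x ^ α * y ^ β) = (1 / x ^ α) * (1 / y ^ β) := by ring
      _ ≤ (2 ^ max α β / d ^ min α β) * (1 / y ^ β) := by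
          apply mul_le_mul_of_nonneg_right h1; positivity
      _ ≤ _ := by
          apply mul_le_mul_of_nonneg_left _ (by positivity)
          have : (0:ℝ) ≤ 1 / x ^ α := by positivity
          linarith
  · have hcy : d / 2 ≤ y := by linarith
    have h1 : 1 / y ^ β ≤ 2 ^ max α β / d ^ min α β :=
      hkey β (min_le_right _ _) (le_max_right _ _) y hcy hy
    calc 1 / (x ^ α * y ^ β) = (1 / y ^ β) * (1 / x ^ α) := by ring
      _ ≤ (2 ^ max α β / d ^ min α β) * (1 / x ^ α) := by
          apply mul_le_mul_of_nonneg_right h1; positivity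
      _ ≤ _ := by
          apply mul_le_mul_of_nonneg_left _ (by positivity)
          have : (0:ℝ) ≤ 1 / y ^ β := by positivity
          linarith

/-- For integers `a ≠ b` and real exponents `α, β > 1`, the sum over
`j ∈ ℤ \ {a, b}` of `1/(|j-a|^α |j-b|^β)` is at most `C/|a-b|^min α β`
for a constant `C` depending only on `α, β`. -/
theorem stmt1 (α β : ℝ) (hα : 1 < α) (hβ : 1 < β) :
    ∃ C : ℝ, 0 < C ∧ ∀ a b : ℤ, a ≠ b →
      ∑' j : {j : ℤ // j ≠ a ∧ j ≠ b},
          1 / (|((j : ℤ) : ℝ) - a| ^ α * |((j : ℤ) : ℝ) - b| ^ β) ≤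
        C / |(a : ℝ) - b| ^ min α β := by
  set Sα : ℝ := ∑' n : ℤ, 1 / |(n : ℝ)| ^ α with hSαdef
  set Sβ : ℝ := ∑' n : ℤ, 1 / |(n : ℝ)| ^ β with hSβdef
  have hSα0 : 0 ≤ Sα := tsum_nonneg fun n => by positivity
  have hSβ0 : 0 ≤ Sβ := tsum_nonneg fun n => by positivity
  refine ⟨2 ^ max α β * (Sα + Sβ) + 1, by positivity, fun a b hab => ?_⟩
  set d : ℝ := |(a : ℝ) - b| with hddef
  have hd : 1 ≤ d := by
    have h1 : (1 : ℤ) ≤ |a - b| := Int.one_le_abs (sub_ne_zero.mpr hab)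
    have : (1 : ℝ) ≤ |((a - b : ℤ) : ℝ)| := by exact_mod_cast (by exact_mod_cast h1 : (1:ℝ) ≤ ((|a - b| : ℤ) : ℝ))
    simpa [hddef] using this
  have hd0 : (0:ℝ) < d := lt_of_lt_of_le one_pos hd
  set K : ℝ := 2 ^ max α β / d ^ min α β with hKdef
  have hK0 : 0 < K := by positivity
  have hu : Summable (fun j : ℤ => 1 / |(j : ℝ) - a| ^ α) := by
    have := (Real.summable_one_div_int_add_rpow (-(a : ℝ)) α).mpr hα
    simpa [sub_eq_add_neg] using this
  have hv : Summable (fun j : ℤ => 1 / |(j : ℝ) - b| ^ β) := by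
    have := (Real.summable_one_div_int_add_rpow (-(b : ℝ)) β).mpr hβ
    simpa [sub_eq_add_neg] using this
  have hSα : (∑' j : ℤ, 1 / |(j : ℝ) - a| ^ α) = Sα := by
    rw [← (Equiv.addRight a).tsum_eq (fun j : ℤ => 1 / |(j : ℝ) - a| ^ α)]
    rw [hSαdef]
    apply tsum_congr
    intro n
    simp [Equiv.coe_addRight]
  have hSβ : (∑' j : ℤ, 1 / |(j : ℝ) - b| ^ β) = Sβ := by
    rw [← (Equiv.addRight b).tsum_eq (fun j : ℤ => 1 / |(j : ℝ) - b| ^ β)]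
    rw [hSβdef]
    apply tsum_congr
    intro n
    simp [Equiv.coe_addRight]
  have huv : Summable (fun j : ℤ => 1 / |(j : ℝ) - a| ^ α + 1 / |(j : ℝ) - b| ^ β) :=
    hu.add hv
  have habs : ∀ (c : ℤ) (j : ℤ), j ≠ c → 1 ≤ |(j : ℝ) - c| := by
    intro c j hjc
    have h1 : (1 : ℤ) ≤ |j - c| := Int.one_le_abs (sub_ne_zero.mpr hjc)
    have : (1 : ℝ) ≤ ((|j - c| : ℤ) : ℝ) := by exact_mod_cast h1
    simpa using this
  have hle : ∀ j : {j : ℤ // j ≠ a ∧ j ≠ b},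
      1 / (|((j : ℤ) : ℝ) - a| ^ α * |((j : ℤ) : ℝ) - b| ^ β) ≤
        K * (1 / |((j : ℤ) : ℝ) - a| ^ α + 1 / |((j : ℤ) : ℝ) - b| ^ β) := by
    rintro ⟨j, hja, hjb⟩
    refine key_bound α β hα hβ (habs a j hja) (habs b j hjb) hd ?_
    calc d = |(a : ℝ) - b| := hddef
      _ ≤ |(a : ℝ) - j| + |(j : ℝ) - b| := abs_sub_le _ _ _
      _ = |(j : ℝ) - a| + |(j : ℝ) - b| := by rw [abs_sub_comm]
  have hgsum : Summable (fun j : {j : ℤ // j ≠ a ∧ j ≠ b} =>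
      K * (1 / |((j : ℤ) : ℝ) - a| ^ α + 1 / |((j : ℤ) : ℝ) - b| ^ β)) :=
    ((huv.mul_left K).subtype _)
  have hfsum : Summable (fun j : {j : ℤ // j ≠ a ∧ j ≠ b} =>
      1 / (|((j : ℤ) : ℝ) - a| ^ α * |((j : ℤ) : ℝ) - b| ^ β)) :=
    Summable.of_nonneg_of_le (fun j => by positivity) hle hgsum
  calc ∑' j : {j : ℤ // j ≠ a ∧ j ≠ b},
        1 / (|((j : ℤ) : ℝ) - a| ^ α * |((j : ℤ) : ℝ) - b| ^ β)
      ≤ ∑' j : {j : ℤ // j ≠ a ∧ j ≠ b},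
        K * (1 / |((j : ℤ) : ℝ) - a| ^ α + 1 / |((j : ℤ) : ℝ) - b| ^ β) :=
        Summable.tsum_le_tsum hle hfsum hgsum
    _ = K * ∑' j : {j : ℤ // j ≠ a ∧ j ≠ b},
        (1 / |((j : ℤ) : ℝ) - a| ^ α + 1 / |((j : ℤ) : ℝ) - b| ^ β) := tsum_mul_left
    _ ≤ K * ∑' j : ℤ, (1 / |(j : ℝ) - a| ^ α + 1 / |(j : ℝ) - b| ^ β) := by
        apply mul_le_mul_of_nonneg_left _ hK0.le
        exact Summable.tsum_subtype_le
          (fun j : ℤ => 1 / |(j : ℝ) - a| ^ α + 1 / |(j : ℝ) - b| ^ β)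
          {j : ℤ | j ≠ a ∧ j ≠ b} (fun j => by positivity) huv
    _ = K * (Sα + Sβ) := by rw [Summable.tsum_add hu hv, hSα, hSβ]
    _ ≤ (2 ^ max α β * (Sα + Sβ) + 1) / d ^ min α β := by
        rw [hKdef, div_mul_eq_mul_div]
        gcongr
        linarith
    _ = (2 ^ max α β * (Sα + Sβ) + 1) / |(a : ℝ) - b| ^ min α β := by rw [hddef]
end

section
/- Let n ≥ 0 and l ≥ 0 be integers with 2n + l ≥ 1, and let E_m(t) = (m+t)² for m ∈ ℤ. Then for every integer m with m ≠ n and m ≠ -n-l, and every t in the interval [l/2 - 1/4, l/2 + 1/4), one has |E_m(t) - E_n(t)| ≥ (1/2)·|m-n|·|m+n+l|. -/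
/-- For nonnegative integers `n, l` with `2n + l ≥ 1`, `E_m(t) = (m+t)²`,
every integer `m ∉ {n, -n-l}` and `t ∈ [l/2 - 1/4, l/2 + 1/4)` satisfy
`|E_m(t) - E_n(t)| ≥ (1/2)|m-n||m+n+l|`. -/
theorem stmt4 (n l : ℤ) (hn : 0 ≤ n) (hl : 0 ≤ l) (h : 1 ≤ 2 * n + l)
    (m : ℤ) (hm1 : m ≠ n) (hm2 : m ≠ -n - l) (t : ℝ)
    (ht1 : (l : ℝ) / 2 - 1 / 4 ≤ t) (ht2 : t < (l : ℝ) / 2 + 1 / 4) :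
    (1 / 2) * |(m : ℝ) - n| * |(m : ℝ) + n + l| ≤
      |((m : ℝ) + t) ^ 2 - ((n : ℝ) + t) ^ 2| := by
  have hK : m + n + l ≠ 0 := by omega
  have hK1 : (1 : ℝ) ≤ |(m : ℝ) + n + l| := by
    have := Int.one_le_abs hK
    have : (1 : ℝ) ≤ |((m + n + l : ℤ) : ℝ)| := by
      rw [← Int.cast_abs]; exact_mod_cast this
    simpa using this
  have heq : ((m : ℝ) + t) ^ 2 - ((n : ℝ) + t) ^ 2
      = ((m : ℝ) - n) * ((m : ℝ) + n + 2 * t) := by ring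
  rw [heq, abs_mul]
  have h2 : |(m : ℝ) + n + l| / 2 ≤ |(m : ℝ) + n + 2 * t| := by
    have htri : |(m : ℝ) + n + l| - |(l : ℝ) - 2 * t| ≤ |(m : ℝ) + n + 2 * t| := by
      have := abs_sub_abs_le_abs_sub ((m : ℝ) + n + l) ((l : ℝ) - 2 * t)
      have heq2 : (m : ℝ) + n + l - ((l : ℝ) - 2 * t) = (m : ℝ) + n + 2 * t := by ring
      rwa [heq2] at this
    have hsmall : |(l : ℝ) - 2 * t| ≤ 1 / 2 := by
      rw [abs_le]; constructor <;> linarith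
    nlinarith [abs_nonneg ((m : ℝ) + n + l)]
  have hmn : (0 : ℝ) ≤ |(m : ℝ) - n| := abs_nonneg _
  nlinarith
end

section
/- Let n ≥ 0 and l ≥ 0 be integers with 2n + l ≥ 1. There is a universal constant c > 0 such that inf over m ∈ ℤ \ {n, -n-l} and t ∈ [l/2 - 1/4, l/2 + 1/4) of |(m+t)² - (n+t)²| is at least c·|2n+l|. -/
/-- There is a universal constant `c > 0` such that for nonnegative integers
`n, l` with `2n+l ≥ 1`, the infimum over `m ∈ ℤ \ {n, -n-l}` and
`t ∈ [l/2 - 1/4, l/2 + 1/4)` of `|(m+t)² - (n+t)²|` is at least `c|2n+l|`. -/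
theorem stmt5 :
    ∃ c : ℝ, 0 < c ∧ ∀ n l : ℤ, 0 ≤ n → 0 ≤ l → 1 ≤ 2 * n + l →
      ∀ m : ℤ, m ≠ n → m ≠ -n - l →
      ∀ t : ℝ, (l : ℝ) / 2 - 1 / 4 ≤ t → t < (l : ℝ) / 2 + 1 / 4 →
        c * |2 * (n : ℝ) + l| ≤ |((m : ℝ) + t) ^ 2 - ((n : ℝ) + t) ^ 2| := by
  refine ⟨1/4, by norm_num, ?_⟩
  intro n l hn hl hN m hm1 hm2 t ht1 ht2
  have hN' : (1:ℝ) ≤ 2*(n:ℝ) + l := by exact_mod_cast hN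
  rw [abs_of_pos (show (0:ℝ) < 2*(n:ℝ)+l by linarith)]
  have key : ((m:ℝ)+t)^2 - ((n:ℝ)+t)^2 = ((m:ℝ)-(n:ℝ)) * ((m:ℝ)+(n:ℝ)+2*t) := by
    ring
  rw [key, abs_mul]
  have hs : m + n + l ≠ 0 := by
    intro h; apply hm2; omega
  rcases lt_or_gt_of_ne hm1 with h | h
  · -- m < n
    have hd : (m:ℝ) + 1 ≤ (n:ℝ) := by exact_mod_cast h
    rcases hs.lt_or_gt with hs' | hs'
    · -- m + n + l ≤ -1
      have hs2 : (m:ℝ) + n + l ≤ -1 := by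
        have h2 : m + n + l ≤ -1 := by omega
        exact_mod_cast h2
      have hu : (m:ℝ)+(n:ℝ)+2*t ≤ -1/2 := by linarith
      rw [abs_of_neg (by linarith : (m:ℝ)+(n:ℝ)+2*t < 0),
          abs_of_neg (by linarith : (m:ℝ)-(n:ℝ) < 0)]
      nlinarith [mul_nonneg (by linarith : (0:ℝ) ≤ (n:ℝ)-(m:ℝ)-1)
        (by linarith : (0:ℝ) ≤ -((m:ℝ)+(n:ℝ)+2*t) - 1/2)]
    · -- m + n + l ≥ 1
      have hs2 : (1:ℝ) ≤ (m:ℝ) + n + l := by exact_mod_cast hs'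
      have hu : (1:ℝ)/2 ≤ (m:ℝ)+(n:ℝ)+2*t := by linarith
      rw [abs_of_pos (by linarith : (0:ℝ) < (m:ℝ)+(n:ℝ)+2*t),
          abs_of_neg (by linarith : (m:ℝ)-(n:ℝ) < 0)]
      -- k = n - m satisfies 1 ≤ k ≤ N - 1, u ≥ N - k - 1/2
      nlinarith [mul_nonneg (by linarith : (0:ℝ) ≤ (n:ℝ)-(m:ℝ)-1)
          (by linarith : (0:ℝ) ≤ (m:ℝ)+(n:ℝ)+2*t - 1/2),
        mul_nonneg (by linarith : (0:ℝ) ≤ (n:ℝ)-(m:ℝ)-1)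
          (by linarith : (0:ℝ) ≤ 2*(n:ℝ)+l - 1 - ((n:ℝ)-(m:ℝ))),
        mul_nonneg (by linarith : (0:ℝ) ≤ (n:ℝ)-(m:ℝ))
          (by linarith : (0:ℝ) ≤ (m:ℝ)+(n:ℝ)+2*t - ((m:ℝ)+(n:ℝ)+l) + 1/2)]
  · -- m > n
    have hd : (n:ℝ) + 1 ≤ (m:ℝ) := by exact_mod_cast h
    have hu : 2*(n:ℝ)+l + 1/2 ≤ (m:ℝ)+(n:ℝ)+2*t := by linarith
    rw [abs_of_pos (by linarith : (0:ℝ) < (m:ℝ)+(n:ℝ)+2*t),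
        abs_of_pos (by linarith : (0:ℝ) < (m:ℝ)-(n:ℝ))]
    nlinarith [mul_nonneg (by linarith : (0:ℝ) ≤ (m:ℝ)-(n:ℝ)-1)
      (by linarith : (0:ℝ) ≤ (m:ℝ)+(n:ℝ)+2*t - (2*(n:ℝ)+l+1/2))]
end

section
/- Let α > 0, let n, l be nonnegative integers with 2n+l ≥ 1, and suppose |p² - (2n+2t)²| ≥ (1/4)|p² - (2n+l)²| for all integers p ∉ {0, ±(2n+l)} and t ∈ I_l = [l/2-1/4, l/2+1/4). Then for a sequence (V̂(p)) with Σ_p |V̂(p)|²(1+p²)^α =: ‖V‖_α² < ∞, one has sup_{t ∈ I_l} Σ_{p ∈ ℤ \ {0, ±(2n+l)}} |V̂(p)|² / |p² - (2n+2t)²| ≤ C·‖V‖_α² / (2n+l)^{min(1+2α, 2)} for a constant C depending only on α. -/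
-- integer gap: m ≤ |p² - m²|
lemma int_gap (m p : ℤ) (hm : 1 ≤ m) (hp0 : p ≠ 0) (hpm : p ≠ m) (hpm' : p ≠ -m) :
    m ≤ |p ^ 2 - m ^ 2| := by
  have hq1 : 1 ≤ |p| := by
    rcases lt_trichotomy p 0 with h | h | h
    · rw [abs_of_neg h]; omega
    · exact absurd h hp0
    · rw [abs_of_pos h]; omega
  have hqm : |p| ≠ m := by
    rcases abs_choice p with h | h <;> omega
  have hpq : p ^ 2 = |p| ^ 2 := (sq_abs p).symm
  rcases lt_or_gt_of_ne hqm with h | h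
  · have h1 : |p| ≤ m - 1 := by omega
    have h2 : p ^ 2 ≤ m ^ 2 - (2 * m - 1) := by nlinarith
    rw [abs_of_nonpos (by nlinarith)]
    nlinarith
  · have h1 : m + 1 ≤ |p| := by omega
    have h2 : m ^ 2 + (2 * m + 1) ≤ p ^ 2 := by nlinarith
    rw [abs_of_nonneg (by nlinarith)]
    nlinarith

-- key pointwise bound over ℝ
lemma key_bound_s9 (α : ℝ) (hα : 0 < α) (m p : ℤ) (hm : 1 ≤ m) (hp0 : p ≠ 0)
    (hpm : p ≠ m) (hpm' : p ≠ -m) :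
    (m : ℝ) ^ min (1 + 2 * α) 2 ≤
      4 ^ (α + 1) * (1 + (p : ℝ) ^ 2) ^ α * |(p : ℝ) ^ 2 - (m : ℝ) ^ 2| := by
  set μ : ℝ := min (1 + 2 * α) 2 with hμ
  have hmR : (1 : ℝ) ≤ (m : ℝ) := by exact_mod_cast hm
  have hm0 : (0 : ℝ) < (m : ℝ) := by linarith
  have hE : (m : ℝ) ≤ |(p : ℝ) ^ 2 - (m : ℝ) ^ 2| := by
    have := int_gap m p hm hp0 hpm hpm'
    have : ((m : ℝ)) ≤ |((p ^ 2 - m ^ 2 : ℤ) : ℝ)| := by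
      rw [← Int.cast_abs]; exact_mod_cast this
    simpa using this
  have hw1 : (1 : ℝ) ≤ (1 + (p : ℝ) ^ 2) ^ α :=
    Real.one_le_rpow (by nlinarith [sq_nonneg ((p : ℝ))]) hα.le
  have h4 : (4 : ℝ) ≤ 4 ^ (α + 1) := by
    calc (4 : ℝ) = 4 ^ (1 : ℝ) := by norm_num
    _ ≤ 4 ^ (α + 1) := Real.rpow_le_rpow_of_exponent_le (by norm_num) (by linarith)
  have hEpos : (0 : ℝ) < |(p : ℝ) ^ 2 - (m : ℝ) ^ 2| := lt_of_lt_of_le hm0 hE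
  rcases le_or_gt (m : ℤ) (2 * |p|) with hc | hc
  · -- |p| large: m ≤ 2|p|
    have hcR : (m : ℝ) ≤ 2 * |(p : ℝ)| := by
      have : ((m : ℝ)) ≤ ((2 * |p| : ℤ) : ℝ) := by exact_mod_cast hc
      simpa [Int.cast_abs] using this
    have h1 : (m : ℝ) ^ μ = (m : ℝ) ^ (μ - 1) * (m : ℝ) := by
      rw [← Real.rpow_add_one hm0.ne' (μ - 1), sub_add_cancel]
    have h2 : (m : ℝ) ^ (μ - 1) ≤ (m : ℝ) ^ (2 * α) :=
      Real.rpow_le_rpow_of_exponent_le hmR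
        (by have := min_le_left (1 + 2 * α) 2; simp only [hμ]; linarith)
    have h3 : (m : ℝ) ^ (2 * α) = ((m : ℝ) ^ 2) ^ α := by
      rw [← Real.rpow_natCast (m : ℝ) 2, ← Real.rpow_mul hm0.le]
      norm_num [mul_comm]
    have h5 : ((m : ℝ) ^ 2) ^ α ≤ (4 * (1 + (p : ℝ) ^ 2)) ^ α := by
      apply Real.rpow_le_rpow (by positivity) _ hα.le
      have : (m : ℝ) ^ 2 ≤ 4 * (p : ℝ) ^ 2 := by
        nlinarith [abs_nonneg (p : ℝ), sq_abs (p : ℝ)]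
      nlinarith
    have h6 : ((4 : ℝ) * (1 + (p : ℝ) ^ 2)) ^ α = 4 ^ α * (1 + (p : ℝ) ^ 2) ^ α :=
      Real.mul_rpow (by norm_num) (by positivity)
    have h7 : (4 : ℝ) ^ α ≤ 4 ^ (α + 1) :=
      Real.rpow_le_rpow_of_exponent_le (by norm_num) (by linarith)
    have hwpos : (0 : ℝ) < (1 + (p : ℝ) ^ 2) ^ α := by positivity
    calc (m : ℝ) ^ μ = (m : ℝ) ^ (μ - 1) * (m : ℝ) := h1
      _ ≤ (4 ^ α * (1 + (p : ℝ) ^ 2) ^ α) * (m : ℝ) := by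
          have := h2.trans (h3.le.trans (h5.trans_eq h6))
          exact mul_le_mul_of_nonneg_right this hm0.le
      _ ≤ 4 ^ (α + 1) * (1 + (p : ℝ) ^ 2) ^ α * |(p : ℝ) ^ 2 - (m : ℝ) ^ 2| := by
          have h40 : (0 : ℝ) < (4 : ℝ) ^ α := by positivity
          nlinarith [mul_le_mul_of_nonneg_left hE (mul_nonneg h40.le hwpos.le),
            mul_le_mul_of_nonneg_right h7 (mul_nonneg hwpos.le hEpos.le)]
  · -- |p| small: 2|p| < m, so m² - p² ≥ (3/4)m²
    have h1 : 2 * |p| ≤ m - 1 := by omega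
    have hp2 : (p : ℝ) ^ 2 ≤ (m : ℝ) ^ 2 / 4 := by
      have : (4 : ℤ) * p ^ 2 ≤ (m - 1) ^ 2 := by nlinarith [sq_abs p, abs_nonneg p]
      have hR : (4 : ℝ) * (p : ℝ) ^ 2 ≤ ((m : ℝ) - 1) ^ 2 := by exact_mod_cast this
      nlinarith
    have hEeq : |(p : ℝ) ^ 2 - (m : ℝ) ^ 2| = (m : ℝ) ^ 2 - (p : ℝ) ^ 2 := by
      rw [abs_of_nonpos (by nlinarith)]; ring
    have h2 : (m : ℝ) ^ μ ≤ (m : ℝ) ^ 2 := by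
      calc (m : ℝ) ^ μ ≤ (m : ℝ) ^ (2 : ℝ) :=
            Real.rpow_le_rpow_of_exponent_le hmR (min_le_right _ _)
        _ = (m : ℝ) ^ 2 := by
            rw [← Real.rpow_natCast (m : ℝ) 2]; norm_num
    have h3 : (m : ℝ) ^ 2 ≤ (4 / 3) * |(p : ℝ) ^ 2 - (m : ℝ) ^ 2| := by
      rw [hEeq]; nlinarith
    calc (m : ℝ) ^ μ ≤ (4 / 3) * |(p : ℝ) ^ 2 - (m : ℝ) ^ 2| := h2.trans h3
      _ ≤ 4 ^ (α + 1) * (1 + (p : ℝ) ^ 2) ^ α * |(p : ℝ) ^ 2 - (m : ℝ) ^ 2| := by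
          nlinarith [mul_le_mul_of_nonneg_right hw1 hEpos.le,
            mul_le_mul_of_nonneg_right h4 (mul_nonneg (le_trans zero_le_one hw1)
              hEpos.le)]
/-- For `α > 0` there is a constant `C` depending only on `α` such that for
nonnegative integers `n, l` with `2n+l ≥ 1`, assuming the quadratic gap bound
`|p² - (2n+2t)²| ≥ (1/4)|p² - (2n+l)²|` on `I_l`, any `V̂` with finite weighted
norm `‖V‖_α²` satisfies, for all `t ∈ I_l = [l/2-1/4, l/2+1/4)`,
`Σ_{p ∉ {0, ±(2n+l)}} |V̂(p)|²/|p² - (2n+2t)²| ≤ C‖V‖_α²/(2n+l)^min(1+2α,2)`. -/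
theorem stmt9 (α : ℝ) (hα : 0 < α) :
    ∃ C : ℝ, 0 < C ∧ ∀ n l : ℤ, 0 ≤ n → 0 ≤ l → 1 ≤ 2 * n + l →
      (∀ p : ℤ, p ≠ 0 → p ≠ 2 * n + l → p ≠ -(2 * n + l) →
        ∀ t : ℝ, (l : ℝ) / 2 - 1 / 4 ≤ t → t < (l : ℝ) / 2 + 1 / 4 →
          (1 / 4) * |((p : ℝ)) ^ 2 - (2 * (n : ℝ) + l) ^ 2| ≤
            |((p : ℝ)) ^ 2 - (2 * (n : ℝ) + 2 * t) ^ 2|) →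
      ∀ V : ℤ → ℂ,
        Summable (fun p : ℤ => ‖V p‖ ^ 2 * (1 + (p : ℝ) ^ 2) ^ α) →
      ∀ t : ℝ, (l : ℝ) / 2 - 1 / 4 ≤ t → t < (l : ℝ) / 2 + 1 / 4 →
        ∑' p : {p : ℤ // p ≠ 0 ∧ p ≠ 2 * n + l ∧ p ≠ -(2 * n + l)},
            ‖V p‖ ^ 2 /
              |(((p : ℤ) : ℝ)) ^ 2 - (2 * (n : ℝ) + 2 * t) ^ 2| ≤
          C * (∑' p : ℤ, ‖V p‖ ^ 2 * (1 + (p : ℝ) ^ 2) ^ α) /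
            (2 * (n : ℝ) + l) ^ min (1 + 2 * α) 2 := by
  refine ⟨4 ^ (α + 2), by positivity, ?_⟩
  intro n l hn hl hnl hgap V hV t ht1 ht2
  set m : ℤ := 2 * n + l with hmdef
  set μ : ℝ := min (1 + 2 * α) 2 with hμ
  have hmR : (2 * (n : ℝ) + l) = (m : ℝ) := by push_cast [hmdef]; ring
  have hm1R : (1 : ℝ) ≤ (m : ℝ) := by exact_mod_cast hnl
  have hm0 : (0 : ℝ) < (m : ℝ) := by linarith
  have hMpos : (0 : ℝ) < (m : ℝ) ^ μ := Real.rpow_pos_of_pos hm0 μ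
  set g : ℤ → ℝ := fun p => ‖V p‖ ^ 2 * (1 + (p : ℝ) ^ 2) ^ α with hg
  set K : ℝ := 4 ^ (α + 2) / (m : ℝ) ^ μ with hK
  have hKpos : 0 < K := by positivity
  set S := {p : ℤ // p ≠ 0 ∧ p ≠ 2 * n + l ∧ p ≠ -(2 * n + l)}
  set f : S → ℝ := fun p =>
    ‖V p‖ ^ 2 / |(((p : ℤ) : ℝ)) ^ 2 - (2 * (n : ℝ) + 2 * t) ^ 2| with hf
  -- pointwise bound
  have hpt : ∀ p : S, f p ≤ K * g (p : ℤ) := by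
    rintro ⟨p, hp0, hpm, hpm'⟩
    have hkey := key_bound_s9 α hα m p hnl hp0 hpm hpm'
    have hgapp := hgap p hp0 hpm hpm' t ht1 ht2
    rw [hmR] at hgapp
    set a : ℝ := ‖V p‖ ^ 2 with ha
    set w : ℝ := (1 + (p : ℝ) ^ 2) ^ α with hw
    set E : ℝ := |(p : ℝ) ^ 2 - (m : ℝ) ^ 2| with hE
    set D : ℝ := |(p : ℝ) ^ 2 - (2 * (n : ℝ) + 2 * t) ^ 2| with hD
    have hEpos : 0 < E := lt_of_lt_of_le hm0 (by
      have := int_gap m p hnl hp0 hpm hpm'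
      have h2 : ((m : ℝ)) ≤ |((p ^ 2 - m ^ 2 : ℤ) : ℝ)| := by
        rw [← Int.cast_abs]; exact_mod_cast this
      simpa [hE] using h2)
    have hDpos : 0 < D := lt_of_lt_of_le (by positivity) hgapp
    have hwpos : 0 < w := by positivity
    have ha0 : 0 ≤ a := by positivity
    -- m^μ ≤ 4^(α+2) * w * D
    have hkey2 : (m : ℝ) ^ μ ≤ 4 ^ (α + 2) * w * D := by
      have h42 : (4 : ℝ) ^ (α + 2) = 4 ^ (α + 1) * 4 := by
        rw [show α + 2 = (α + 1) + 1 by ring, Real.rpow_add (by norm_num),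
          Real.rpow_one]
      have hED : E ≤ 4 * D := by linarith
      calc (m : ℝ) ^ μ ≤ 4 ^ (α + 1) * w * E := hkey
        _ ≤ 4 ^ (α + 1) * w * (4 * D) := by
            have h40 : (0 : ℝ) < (4 : ℝ) ^ (α + 1) := by positivity
            exact mul_le_mul_of_nonneg_left hED (by positivity)
        _ = 4 ^ (α + 2) * w * D := by rw [h42]; ring
    have hone : (1 : ℝ) ≤ K * w * D := by
      rw [hK]
      rw [div_mul_eq_mul_div, div_mul_eq_mul_div, le_div_iff₀ hMpos, one_mul]
      linarith [hkey2]
    have : f ⟨p, hp0, hpm, hpm'⟩ = a / D := rfl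
    rw [this]
    calc a / D ≤ (a / D) * (K * w * D) :=
          le_mul_of_one_le_right (div_nonneg ha0 hDpos.le) hone
      _ = K * (a * w) := by field_simp
      _ = K * g p := rfl
  have hgS : Summable fun p : S => K * g (p : ℤ) := (hV.subtype _).mul_left K
  have hfnn : ∀ p : S, 0 ≤ f p := fun p => by
    apply div_nonneg (by positivity) (abs_nonneg _)
  have hfS : Summable f := Summable.of_nonneg_of_le hfnn hpt hgS
  have hgnn : ∀ p : ℤ, 0 ≤ g p := fun p => by positivity
  calc ∑' p : S, f p ≤ ∑' p : S, K * g (p : ℤ) := Summable.tsum_le_tsum hpt hfS hgS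
    _ = K * ∑' p : S, g (p : ℤ) := tsum_mul_left
    _ ≤ K * ∑' p : ℤ, g p := by
        apply mul_le_mul_of_nonneg_left _ hKpos.le
        exact Summable.tsum_subtype_le g _ hgnn hV
    _ = 4 ^ (α + 2) * (∑' p : ℤ, g p) / (m : ℝ) ^ μ := by rw [hK]; ring
    _ = 4 ^ (α + 2) * (∑' p : ℤ, ‖V p‖ ^ 2 * (1 + (p : ℝ) ^ 2) ^ α) /
          (2 * (n : ℝ) + l) ^ μ := by rw [hmR]
end

section
/- Let n, l be nonnegative integers with 2n+l ≥ 1 and t ∈ I_l = [l/2 - 1/4, l/2 + 1/4). Then for any integer p with p ∉ {2n+l, -(2n+l)}, one has |p² - (2n+2t)²| ≥ (1/4)·|p² - (2n+l)²|. -/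
/-- For nonnegative integers `n, l` with `2n+l ≥ 1`, `t ∈ [l/2-1/4, l/2+1/4)`,
and any integer `p ≠ ±(2n+l)`, one has
`|p² - (2n+2t)²| ≥ (1/4)|p² - (2n+l)²|`. -/
theorem stmt10 (n l : ℤ) (hn : 0 ≤ n) (hl : 0 ≤ l) (h : 1 ≤ 2 * n + l)
    (t : ℝ) (ht1 : (l : ℝ) / 2 - 1 / 4 ≤ t) (ht2 : t < (l : ℝ) / 2 + 1 / 4)
    (p : ℤ) (hp1 : p ≠ 2 * n + l) (hp2 : p ≠ -(2 * n + l)) :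
    (1 / 4) * |((p : ℝ)) ^ 2 - (2 * (n : ℝ) + l) ^ 2| ≤
      |((p : ℝ)) ^ 2 - (2 * (n : ℝ) + 2 * t) ^ 2| := by
  set M : ℝ := 2 * (n : ℝ) + l with hM
  set s : ℝ := 2 * (n : ℝ) + 2 * t with hs
  have hm1 : (1 : ℝ) ≤ M := by
    have : ((1 : ℤ) : ℝ) ≤ ((2 * n + l : ℤ) : ℝ) := by exact_mod_cast h
    push_cast at this; linarith
  have hs1 : M - 1 / 2 ≤ s := by simp only [hM, hs]; linarith
  have hs2 : s < M + 1 / 2 := by simp only [hM, hs]; linarith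
  have hcase : |p| ≤ 2 * n + l - 1 ∨ 2 * n + l + 1 ≤ |p| := by
    rcases abs_cases p with ⟨h1, _⟩ | ⟨h1, _⟩ <;> omega
  set q : ℝ := |(p : ℝ)| with hqdef
  have hq2 : q ^ 2 = (p : ℝ) ^ 2 := sq_abs _
  have hq0 : (0 : ℝ) ≤ q := abs_nonneg _
  have hqc : q = ((|p| : ℤ) : ℝ) := by rw [hqdef, Int.cast_abs]

  have hp2q : (p : ℝ) ^ 2 = q ^ 2 := hq2.symm
  clear_value M s q
  rw [hp2q]
  have hs0 : 0 ≤ s := by linarith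
  rcases hcase with hc | hc
  · have hq : q ≤ M - 1 := by
      have : ((|p| : ℤ) : ℝ) ≤ ((2 * n + l - 1 : ℤ) : ℝ) := by exact_mod_cast hc
      rw [← hqc] at this; push_cast at this; simp only [hM]; linarith
    have h1 : q ^ 2 - M ^ 2 ≤ 0 := by nlinarith
    have h2 : q ^ 2 - s ^ 2 ≤ 0 := by nlinarith
    rw [abs_of_nonpos h1, abs_of_nonpos h2]
    nlinarith [sq_nonneg (M - 1/2 - q), sq_nonneg (s - (M - 1/2))]
  · have hq : M + 1 ≤ q := by
      have : ((2 * n + l + 1 : ℤ) : ℝ) ≤ ((|p| : ℤ) : ℝ) := by exact_mod_cast hc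
      rw [← hqc] at this; push_cast at this; simp only [hM]; linarith
    have h1 : 0 ≤ q ^ 2 - M ^ 2 := by nlinarith
    have h2 : 0 ≤ q ^ 2 - s ^ 2 := by nlinarith
    rw [abs_of_nonneg h1, abs_of_nonneg h2]
    nlinarith [sq_nonneg (q - (M + 1/2)), sq_nonneg ((M + 1/2) - s)]
end

section
/- Let n, l be integers with q := 2n+l ≥ 1 and let V̂ : ℤ → ℂ satisfy Σ|V̂(p)|²(1+p²)^α = ‖V‖_α² < ∞ for some α > 0. Then Σ_{m ∈ ℤ \ {n, -n-l}} |V̂(n-m)| |V̂(m+n+l)| / (|m-n| |m+n+l|) ≤ C ‖V‖_α² / q^{1+α} for a constant C depending only on α. -/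
lemma stmt15_key (α : ℝ) (hα : 0 < α) (a b q X Y : ℝ) (ha : 1 ≤ a) (hb : 1 ≤ b)
    (hq : 1 ≤ q) (hab : q ≤ a + b) (hX : 0 ≤ X) (hY : 0 ≤ Y) :
    X * Y / (a * b) ≤
      2 ^ (1 + α) * ((X ^ 2 * (1 + a ^ 2) ^ α + Y ^ 2 * (1 + b ^ 2) ^ α) / 2) / q ^ (1 + α) := by
  have ha0 : (0:ℝ) < a := by linarith
  have hb0 : (0:ℝ) < b := by linarith
  have hq0 : (0:ℝ) < q := by linarith
  set w1 : ℝ := (1 + a ^ 2) ^ (α / 2) with hw1def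
  set w2 : ℝ := (1 + b ^ 2) ^ (α / 2) with hw2def
  have hw1 : (0:ℝ) < w1 := Real.rpow_pos_of_pos (by positivity) _
  have hw2 : (0:ℝ) < w2 := Real.rpow_pos_of_pos (by positivity) _
  have hw1sq : w1 * w1 = (1 + a ^ 2) ^ α := by
    rw [hw1def, ← Real.rpow_add (by positivity)]; ring_nf
  have hw2sq : w2 * w2 = (1 + b ^ 2) ^ α := by
    rw [hw2def, ← Real.rpow_add (by positivity)]; ring_nf
  have haα : a ^ α ≤ w1 := by
    have h : (a ^ 2 : ℝ) ^ (α / 2) = a ^ α := by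
      rw [← Real.rpow_natCast a 2, ← Real.rpow_mul ha0.le]
      congr 1; ring
    rw [hw1def, ← h]
    exact Real.rpow_le_rpow (by positivity) (by linarith) (by linarith)
  have hbα : b ^ α ≤ w2 := by
    have h : (b ^ 2 : ℝ) ^ (α / 2) = b ^ α := by
      rw [← Real.rpow_natCast b 2, ← Real.rpow_mul hb0.le]
      congr 1; ring
    rw [hw2def, ← h]
    exact Real.rpow_le_rpow (by positivity) (by linarith) (by linarith)
  have hD : (q / 2) ^ (1 + α) ≤ a * b * (w1 * w2) := by
    have h1 : q / 2 ≤ a * b := by nlinarith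
    have h2 : (q / 2) ^ (1 + α) ≤ (a * b) ^ (1 + α) :=
      Real.rpow_le_rpow (by linarith) h1 (by linarith)
    have h3 : (a * b) ^ (1 + α) = a * b * (a ^ α * b ^ α) := by
      rw [Real.rpow_add (by positivity), Real.rpow_one,
        Real.mul_rpow ha0.le hb0.le]
    calc (q / 2) ^ (1 + α) ≤ (a * b) ^ (1 + α) := h2
      _ = a * b * (a ^ α * b ^ α) := h3
      _ ≤ a * b * (w1 * w2) := by
          apply mul_le_mul_of_nonneg_left _ (by positivity)
          exact mul_le_mul haα hbα (Real.rpow_nonneg hb0.le _) hw1.le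
  have hu : X * Y * (w1 * w2) ≤ (X ^ 2 * (1 + a ^ 2) ^ α + Y ^ 2 * (1 + b ^ 2) ^ α) / 2 := by
    nlinarith [sq_nonneg (X * w1 - Y * w2), hw1sq, hw2sq]
  have hqpow : (0:ℝ) < (q / 2) ^ (1 + α) := Real.rpow_pos_of_pos (by linarith) _
  have step1 : X * Y / (a * b) = X * Y * (w1 * w2) / (a * b * (w1 * w2)) := by
    rw [mul_div_mul_right _ _ (by positivity)]
  have step2 : X * Y * (w1 * w2) / (a * b * (w1 * w2)) ≤
      (X ^ 2 * (1 + a ^ 2) ^ α + Y ^ 2 * (1 + b ^ 2) ^ α) / 2 / (q / 2) ^ (1 + α) :=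
    div_le_div₀ (by positivity) hu hqpow hD
  have step3 : (X ^ 2 * (1 + a ^ 2) ^ α + Y ^ 2 * (1 + b ^ 2) ^ α) / 2 / (q / 2) ^ (1 + α) =
      2 ^ (1 + α) * ((X ^ 2 * (1 + a ^ 2) ^ α + Y ^ 2 * (1 + b ^ 2) ^ α) / 2) / q ^ (1 + α) := by
    rw [Real.div_rpow hq0.le (by norm_num), div_div_eq_mul_div]
    ring
  rw [step1, ← step3]
  exact step2


/-- For `α > 0` there is a constant `C` depending only on `α` such that for
integers `n, l` with `q = 2n+l ≥ 1` and `V̂` with finite weighted norm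
`‖V‖_α²`,
`Σ_{m ∉ {n, -n-l}} |V̂(n-m)||V̂(m+n+l)|/(|m-n||m+n+l|) ≤ C‖V‖_α²/q^(1+α)`. -/
theorem stmt15 (α : ℝ) (hα : 0 < α) :
    ∃ C : ℝ, 0 < C ∧ ∀ n l : ℤ, 1 ≤ 2 * n + l →
      ∀ V : ℤ → ℂ,
        Summable (fun p : ℤ => ‖V p‖ ^ 2 * (1 + (p : ℝ) ^ 2) ^ α) →
        ∑' m : {m : ℤ // m ≠ n ∧ m ≠ -n - l},
            ‖V (n - m)‖ * ‖V (m + n + l)‖ /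
              (|((m : ℤ) : ℝ) - n| * |((m : ℤ) : ℝ) + n + l|) ≤
          C * (∑' p : ℤ, ‖V p‖ ^ 2 * (1 + (p : ℝ) ^ 2) ^ α) /
            (2 * (n : ℝ) + l) ^ (1 + α) := by
  refine ⟨2 ^ (1 + α), Real.rpow_pos_of_pos (by norm_num) _, ?_⟩
  intro n l hq V hV
  set M := {m : ℤ // m ≠ n ∧ m ≠ -n - l}
  set f : ℤ → ℝ := fun p => ‖V p‖ ^ 2 * (1 + (p : ℝ) ^ 2) ^ α with hfdef
  set S := ∑' p : ℤ, f p with hSdef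
  have hf0 : ∀ p, 0 ≤ f p := fun p => by
    have : (0:ℝ) ≤ (1 + (p:ℝ)^2) ^ α := Real.rpow_nonneg (by positivity) _
    positivity
  have hS0 : 0 ≤ S := tsum_nonneg hf0
  have hqR : (1:ℝ) ≤ 2 * (n:ℝ) + l := by exact_mod_cast hq
  have hQ0 : (0:ℝ) < (2 * (n:ℝ) + l) ^ (1 + α) :=
    Real.rpow_pos_of_pos (by linarith) _
  -- injections and summable components on the subtype
  have hG1 : Summable (fun m : M => f (n - (m:ℤ))) := by
    have h1 : Summable (fun m : ℤ => f (n - m)) := by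
      have hinj : Function.Injective (fun m : ℤ => n - m) := by
        intro a b h
        simp only at h
        omega
      exact hV.comp_injective hinj
    exact h1.subtype _
  have hG2 : Summable (fun m : M => f ((m:ℤ) + n + l)) := by
    have h1 : Summable (fun m : ℤ => f (m + n + l)) := by
      have hinj : Function.Injective (fun m : ℤ => m + n + l) := by
        intro a b h
        simp only at h
        omega
      exact hV.comp_injective hinj
    exact h1.subtype _
  have hT1 : ∑' m : M, f (n - (m:ℤ)) ≤ S := by
    refine hG1.tsum_le_tsum_of_inj (fun m : M => n - (m:ℤ))
      (fun a b h => by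
        have h' : n - (a:ℤ) = n - (b:ℤ) := h
        exact Subtype.ext (by omega)) (fun c _ => hf0 c) (fun m => le_refl _) hV
  have hT2 : ∑' m : M, f ((m:ℤ) + n + l) ≤ S := by
    refine hG2.tsum_le_tsum_of_inj (fun m : M => (m:ℤ) + n + l)
      (fun a b h => by
        have h' : (a:ℤ) + n + l = (b:ℤ) + n + l := h
        exact Subtype.ext (by omega)) (fun c _ => hf0 c) (fun m => le_refl _) hV
  -- pointwise bound
  set Q : ℝ := (2 * (n:ℝ) + l) ^ (1 + α) with hQdef
  have hpt : ∀ m : M,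
      ‖V (n - m)‖ * ‖V (m + n + l)‖ /
        (|((m : ℤ) : ℝ) - n| * |((m : ℤ) : ℝ) + n + l|) ≤
      2 ^ (1 + α) * ((f (n - (m:ℤ)) + f ((m:ℤ) + n + l)) / 2) / Q := by
    rintro ⟨m, hm1, hm2⟩
    have ha : (1:ℝ) ≤ |(m:ℝ) - n| := by
      have h : (1:ℤ) ≤ |m - n| := Int.one_le_abs (by omega)
      have h2 : ((1:ℤ):ℝ) ≤ ((|m - n| : ℤ):ℝ) := Int.cast_le.mpr h
      push_cast at h2
      linarith
    have hb : (1:ℝ) ≤ |(m:ℝ) + n + l| := by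
      have h : (1:ℤ) ≤ |m + n + l| := Int.one_le_abs (by omega)
      have h2 : ((1:ℤ):ℝ) ≤ ((|m + n + l| : ℤ):ℝ) := Int.cast_le.mpr h
      push_cast at h2
      linarith
    have hab : 2 * (n:ℝ) + l ≤ |(m:ℝ) - n| + |(m:ℝ) + n + l| := by
      have h1 : |((m:ℝ) + n + l) - ((m:ℝ) - n)| ≤ |(m:ℝ) + n + l| + |(m:ℝ) - n| :=
        abs_sub _ _
      have h2 : 2 * (n:ℝ) + l ≤ |((m:ℝ) + n + l) - ((m:ℝ) - n)| := by
        have : ((m:ℝ) + n + l) - ((m:ℝ) - n) = 2 * (n:ℝ) + l := by ring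
        rw [this]
        exact le_abs_self _
      linarith
    have key := stmt15_key α hα (|(m:ℝ) - n|) (|(m:ℝ) + n + l|) (2 * (n:ℝ) + l)
      (‖V (n - m)‖) (‖V (m + n + l)‖) ha hb hqR hab
      (norm_nonneg _) (norm_nonneg _)
    have e1 : (1 + |(m:ℝ) - n| ^ 2) = (1 + ((n - m : ℤ):ℝ) ^ 2) := by
      rw [sq_abs]; push_cast; ring
    have e2 : (1 + |(m:ℝ) + n + l| ^ 2) = (1 + ((m + n + l : ℤ):ℝ) ^ 2) := by
      rw [sq_abs]; push_cast; ring
    rw [e1, e2] at key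
    exact key
  -- summability of both sides
  set k : ℝ := 2 ^ (1 + α) / (Q * 2) with hkdef
  have hk0 : 0 ≤ k := by
    have : (0:ℝ) < 2 ^ (1 + α) := Real.rpow_pos_of_pos (by norm_num) _
    positivity
  have hgk : ∀ m : M, 2 ^ (1 + α) * ((f (n - (m:ℤ)) + f ((m:ℤ) + n + l)) / 2) / Q
      = k * (f (n - (m:ℤ)) + f ((m:ℤ) + n + l)) := by
    intro m; rw [hkdef]; ring
  have hg : Summable (fun m : M => k * (f (n - (m:ℤ)) + f ((m:ℤ) + n + l))) :=
    ((hG1.add hG2).mul_left k)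
  have ht : Summable (fun m : M =>
      ‖V (n - m)‖ * ‖V (m + n + l)‖ /
        (|((m : ℤ) : ℝ) - n| * |((m : ℤ) : ℝ) + n + l|)) := by
    refine Summable.of_nonneg_of_le (fun m => by positivity) (fun m => ?_) hg
    rw [← hgk m]; exact hpt m
  calc ∑' m : M, ‖V (n - m)‖ * ‖V (m + n + l)‖ /
        (|((m : ℤ) : ℝ) - n| * |((m : ℤ) : ℝ) + n + l|)
      ≤ ∑' m : M, k * (f (n - (m:ℤ)) + f ((m:ℤ) + n + l)) := by
        refine ht.tsum_le_tsum (fun m => ?_) hg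
        rw [← hgk m]; exact hpt m
    _ = k * ((∑' m : M, f (n - (m:ℤ))) + ∑' m : M, f ((m:ℤ) + n + l)) := by
        rw [tsum_mul_left, hG1.tsum_add hG2]
    _ ≤ k * (S + S) := by
        apply mul_le_mul_of_nonneg_left _ hk0
        exact add_le_add hT1 hT2
    _ = 2 ^ (1 + α) * S / Q := by
        rw [hkdef]
        field_simp
        ring
end

section
/- Let n, l be integers with 2n+l ≥ 1 and let V̂ ∈ ℓ²(ℤ) with ‖V‖₀² = Σ|V̂(p)|². Define the operator B on ℓ²(ℤ) by kernel B(i,j) = χ(i ∉ {n, -n-l}) · V̂(i-j) / ((i-n)(i+n+l)) for i ∉ {n,-n-l} (and 0 otherwise). Then ‖B‖ ≤ C ‖V‖₀ / (2n+l) for a universal constant C. -/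
open scoped Real ENNReal

private lemma hp2' : 0 < (2 : ℝ≥0∞).toReal := by norm_num

private lemma rpow_two' (x : ℝ) : x ^ (2 : ℝ≥0∞).toReal = x ^ 2 := by
  rw [show (2 : ℝ≥0∞).toReal = ((2 : ℕ) : ℝ) by norm_num, Real.rpow_natCast]

set_option maxHeartbeats 1000000 in
private lemma conv_le' (V ψ : lp (fun _ : ℤ => ℂ) 2) (i : ℤ) :
    ‖∑' j : ℤ, V (i - j) * ψ j‖ ≤ ‖V‖ * ‖ψ‖ := by
  have hVsum : Summable fun k : ℤ => ‖V k‖ ^ (2 : ℝ≥0∞).toReal :=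
    (memℓp_gen_iff hp2').1 (lp.memℓp V)
  have hW : Memℓp (fun j : ℤ => (starRingEnd ℂ) (V (i - j))) 2 := by
    apply memℓp_gen
    have : (fun j : ℤ => ‖(starRingEnd ℂ) (V (i - j))‖ ^ (2 : ℝ≥0∞).toReal)
        = fun j : ℤ => (fun k : ℤ => ‖V k‖ ^ (2 : ℝ≥0∞).toReal) ((Equiv.subLeft i) j) := by
      funext j; simp [Equiv.subLeft]
    rw [this]
    exact ((Equiv.subLeft i).summable_iff).2 hVsum
  set W : lp (fun _ : ℤ => ℂ) 2 := ⟨_, hW⟩ with hWdef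
  have hWcoe : ∀ j, W j = (starRingEnd ℂ) (V (i - j)) := fun j => rfl
  have hWnorm : ‖W‖ = ‖V‖ := by
    rw [lp.norm_eq_tsum_rpow hp2', lp.norm_eq_tsum_rpow hp2']
    congr 1
    calc ∑' j, ‖W j‖ ^ (2 : ℝ≥0∞).toReal
        = ∑' j, (fun k : ℤ => ‖V k‖ ^ (2 : ℝ≥0∞).toReal) ((Equiv.subLeft i) j) := by
          congr 1; funext j; simp [hWcoe, Equiv.subLeft]
      _ = ∑' k, ‖V k‖ ^ (2 : ℝ≥0∞).toReal := by
          exact (Equiv.subLeft i).tsum_eq (fun k : ℤ => ‖V k‖ ^ (2 : ℝ≥0∞).toReal)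
  have hinner : (inner ℂ W ψ : ℂ) = ∑' j : ℤ, V (i - j) * ψ j := by
    rw [lp.inner_eq_tsum]
    congr 1; funext j
    simp [hWcoe, RCLike.inner_apply, mul_comm]
  calc ‖∑' j : ℤ, V (i - j) * ψ j‖ = ‖(inner ℂ W ψ : ℂ)‖ := by rw [hinner]
    _ ≤ ‖W‖ * ‖ψ‖ := norm_inner_le_norm _ _
    _ = ‖V‖ * ‖ψ‖ := by rw [hWnorm]

private lemma u_hasSum' : HasSum (fun k : ℤ => ((k : ℝ) ^ 2)⁻¹) (π ^ 2 / 3) := by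
  have h0 : HasSum (fun n : ℕ => ((n : ℝ) ^ 2)⁻¹) (π ^ 2 / 6) := by
    simpa [one_div] using hasSum_zeta_two
  have h2 : HasSum (fun n : ℕ => (((n : ℝ) + 1) ^ 2)⁻¹) (π ^ 2 / 6) := by
    have h2' := (hasSum_nat_add_iff (f := fun n : ℕ => ((n : ℝ) ^ 2)⁻¹)
      (g := π ^ 2 / 6) 1).2 (by simpa using h0)
    refine h2'.congr_fun fun n => ?_
    push_cast; ring_nf
  have h1 : HasSum (fun n : ℕ => (((-(n+1) : ℤ) : ℝ) ^ 2)⁻¹) (π ^ 2 / 6) := by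
    refine h2.congr_fun fun n => ?_
    push_cast; ring_nf
  have h3 := HasSum.of_nat_of_neg_add_one (f := fun k : ℤ => ((k : ℝ) ^ 2)⁻¹) h0 h1
  convert h3 using 1; ring

set_option maxHeartbeats 1600000 in
/-- There is a universal constant `C > 0` such that for integers `n, l` with
`2n+l ≥ 1` and `V̂ ∈ ℓ²(ℤ)`, any bounded operator `B` on `ℓ²(ℤ)` with kernel
`B(i,j) = V̂(i-j)/((i-n)(i+n+l))` for `i ∉ {n, -n-l}` (and `0` otherwise)
satisfies `‖B‖ ≤ C ‖V‖₀ / (2n+l)`. -/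
theorem stmt16 :
    ∃ C : ℝ, 0 < C ∧ ∀ n l : ℤ, 1 ≤ 2 * n + l →
      ∀ V : lp (fun _ : ℤ => ℂ) 2,
      ∀ B : lp (fun _ : ℤ => ℂ) 2 →L[ℂ] lp (fun _ : ℤ => ℂ) 2,
        (∀ (ψ : lp (fun _ : ℤ => ℂ) 2) (i : ℤ),
          B ψ i = if i = n ∨ i = -n - l then 0
            else ((((i : ℝ) - n) * ((i : ℝ) + n + l))⁻¹ : ℝ) •
              ∑' j : ℤ, V (i - j) * ψ j) →
        ‖B‖ ≤ C * ‖V‖ / (2 * (n : ℝ) + l) := by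
  refine ⟨5, by norm_num, ?_⟩
  intro n l hnl V B hB
  set m : ℝ := 2 * (n : ℝ) + l with hmdef
  have hm1 : (1 : ℝ) ≤ m := by
    have : ((1 : ℤ) : ℝ) ≤ ((2 * n + l : ℤ) : ℝ) := Int.cast_le.2 hnl
    push_cast at this; linarith
  have hm0 : (0 : ℝ) < m := lt_of_lt_of_le one_pos hm1
  -- the ℓ² weight function
  set F : ℤ → ℝ := fun i => if i = n ∨ i = -n - l then 0
    else |(((i : ℝ) - n) * ((i : ℝ) + n + l))⁻¹| with hFdef
  -- comparison function
  set G : ℤ → ℝ := fun i =>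
    2 / m ^ 2 * (((((i : ℝ) - n) ^ 2)⁻¹) + ((((i : ℝ) + n + l) ^ 2)⁻¹)) with hGdef
  have hu : Summable (fun k : ℤ => ((k : ℝ) ^ 2)⁻¹) := u_hasSum'.summable
  have hut : ∑' k : ℤ, ((k : ℝ) ^ 2)⁻¹ ≤ 6 := by
    rw [u_hasSum'.tsum_eq]
    nlinarith [Real.pi_le_four, Real.pi_pos]
  have hs1 : Summable (fun i : ℤ => (((i : ℝ) - n) ^ 2)⁻¹) := by
    refine (((Equiv.subRight n).summable_iff).2 hu).congr fun i => ?_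
    simp only [Function.comp, Equiv.subRight_apply]
    push_cast; ring_nf
  have hs1t : ∑' i : ℤ, (((i : ℝ) - n) ^ 2)⁻¹ ≤ 6 := by
    have he : ∑' i : ℤ, (((i : ℝ) - n) ^ 2)⁻¹
        = ∑' k : ℤ, ((k : ℝ) ^ 2)⁻¹ := by
      rw [← (Equiv.subRight n).tsum_eq (fun k : ℤ => ((k : ℝ) ^ 2)⁻¹)]
      congr 1; funext i
      simp only [Equiv.subRight_apply]
      push_cast; ring_nf
    rw [he]; exact hut
  have hs2 : Summable (fun i : ℤ => (((i : ℝ) + n + l) ^ 2)⁻¹) := by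
    refine (((Equiv.addRight (n + l)).summable_iff).2 hu).congr fun i => ?_
    simp only [Function.comp, Equiv.coe_addRight]
    push_cast; ring_nf
  have hs2t : ∑' i : ℤ, (((i : ℝ) + n + l) ^ 2)⁻¹ ≤ 6 := by
    have he : ∑' i : ℤ, (((i : ℝ) + n + l) ^ 2)⁻¹
        = ∑' k : ℤ, ((k : ℝ) ^ 2)⁻¹ := by
      rw [← (Equiv.addRight (n + l)).tsum_eq (fun k : ℤ => ((k : ℝ) ^ 2)⁻¹)]
      congr 1; funext i
      simp only [Equiv.coe_addRight]
      push_cast; ring_nf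
    rw [he]; exact hut
  have hG : Summable G := ((hs1.add hs2).mul_left _)
  have hGt : ∑' i, G i ≤ 24 / m ^ 2 := by
    rw [hGdef]
    rw [tsum_mul_left, Summable.tsum_add hs1 hs2]
    have h12 : ∑' i : ℤ, (((i : ℝ) - n) ^ 2)⁻¹ + ∑' i : ℤ, (((i : ℝ) + n + l) ^ 2)⁻¹
        ≤ 12 := by linarith
    have hc : (0:ℝ) ≤ 2 / m ^ 2 := by positivity
    calc 2 / m ^ 2 * _ ≤ 2 / m ^ 2 * 12 := by exact mul_le_mul_of_nonneg_left h12 hc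
      _ = 24 / m ^ 2 := by ring
  have hFG : ∀ i, F i ^ 2 ≤ G i := by
    intro i
    by_cases hi : i = n ∨ i = -n - l
    · simp only [hFdef, hGdef, if_pos hi]
      have : (0:ℝ) ≤ 2 / m ^ 2 * (((((i : ℝ) - n) ^ 2)⁻¹) + ((((i : ℝ) + n + l) ^ 2)⁻¹)) := by
        positivity
      simpa using this
    · push_neg at hi
      obtain ⟨hin, hil⟩ := hi
      set a : ℝ := (i : ℝ) - n with ha
      set b : ℝ := (i : ℝ) + n + l with hb0
      have ha0 : a ≠ 0 := by
        intro h
        apply hin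
        have : (i : ℝ) = (n : ℝ) := by rw [ha] at h; linarith
        exact_mod_cast this
      have hb0' : b ≠ 0 := by
        intro h
        apply hil
        have : (i : ℝ) = ((-n - l : ℤ) : ℝ) := by push_cast; rw [hb0] at h; linarith
        exact_mod_cast this
      have hba : b - a = m := by rw [ha, hb0, hmdef]; ring
      have hkey : m ^ 2 ≤ 2 * (a ^ 2 + b ^ 2) := by nlinarith [sq_nonneg (a + b)]
      have hgoal : ((a * b)⁻¹) ^ 2 ≤ 2 / m ^ 2 * ((a ^ 2)⁻¹ + (b ^ 2)⁻¹) := by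
        have hdiff : 2 / m ^ 2 * ((a ^ 2)⁻¹ + (b ^ 2)⁻¹) - ((a * b)⁻¹) ^ 2
            = (2 * (a ^ 2 + b ^ 2) - m ^ 2) / (m ^ 2 * a ^ 2 * b ^ 2) := by
          field_simp
          ring
        have hpos : (0:ℝ) ≤ (2 * (a ^ 2 + b ^ 2) - m ^ 2) / (m ^ 2 * a ^ 2 * b ^ 2) :=
          div_nonneg (by linarith) (by positivity)
        linarith [hdiff ▸ hpos]
      simp only [hFdef, if_neg (not_or.2 ⟨hin, hil⟩)]
      rw [sq_abs]
      exact hgoal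
  have hFsq : Summable (fun i => F i ^ 2) :=
    Summable.of_nonneg_of_le (fun i => sq_nonneg _) hFG hG
  have hFt : ∑' i, F i ^ 2 ≤ 24 / m ^ 2 :=
    le_trans (Summable.tsum_le_tsum hFG hFsq hG) hGt
  -- pointwise bound on coordinates of B ψ
  have hpt : ∀ (ψ : lp (fun _ : ℤ => ℂ) 2) (i : ℤ), ‖B ψ i‖ ≤ F i * (‖V‖ * ‖ψ‖) := by
    intro ψ i
    rw [hB ψ i]
    by_cases hi : i = n ∨ i = -n - l
    · rw [if_pos hi]
      simp only [hFdef, if_pos hi, norm_zero]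
      simp
    · rw [if_neg hi]
      simp only [hFdef, if_neg hi]
      rw [norm_smul, Real.norm_eq_abs]
      exact mul_le_mul_of_nonneg_left (conv_le' V ψ i) (abs_nonneg _)
  -- operator norm bound
  have hMnn : 0 ≤ 5 * ‖V‖ / m := by positivity
  refine ContinuousLinearMap.opNorm_le_bound B hMnn ?_
  intro ψ
  have hBψsum : Summable (fun i => ‖B ψ i‖ ^ 2) := by
    refine ((memℓp_gen_iff hp2').1 (lp.memℓp (B ψ))).congr fun i => ?_
    rw [rpow_two']
  have hBψ2 : ‖B ψ‖ ^ 2 = ∑' i, ‖B ψ i‖ ^ 2 := by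
    have h := lp.norm_rpow_eq_tsum hp2' (B ψ)
    rw [rpow_two'] at h
    rw [h]
    exact tsum_congr fun i => rpow_two' _
  have hptsq : ∀ i, ‖B ψ i‖ ^ 2 ≤ F i ^ 2 * (‖V‖ * ‖ψ‖) ^ 2 := by
    intro i
    rw [← mul_pow]
    exact pow_le_pow_left₀ (norm_nonneg _) (hpt ψ i) 2
  have hsum_le : ∑' i, ‖B ψ i‖ ^ 2 ≤ (∑' i, F i ^ 2) * (‖V‖ * ‖ψ‖) ^ 2 := by
    rw [← tsum_mul_right]
    exact Summable.tsum_le_tsum hptsq hBψsum (hFsq.mul_right _)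
  have hfinal : ‖B ψ‖ ^ 2 ≤ (5 * ‖V‖ / m * ‖ψ‖) ^ 2 := by
    rw [hBψ2]
    calc ∑' i, ‖B ψ i‖ ^ 2 ≤ (∑' i, F i ^ 2) * (‖V‖ * ‖ψ‖) ^ 2 := hsum_le
      _ ≤ 24 / m ^ 2 * (‖V‖ * ‖ψ‖) ^ 2 :=
          mul_le_mul_of_nonneg_right hFt (by positivity)
      _ ≤ (5 * ‖V‖ / m * ‖ψ‖) ^ 2 := by
          have h1 : (5 * ‖V‖ / m * ‖ψ‖) ^ 2 = 25 / m ^ 2 * (‖V‖ * ‖ψ‖) ^ 2 := by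
            field_simp; ring
          rw [h1]
          have hX : (0:ℝ) ≤ (‖V‖ * ‖ψ‖) ^ 2 := by positivity
          have h2 : (24:ℝ) / m ^ 2 ≤ 25 / m ^ 2 := by gcongr; norm_num
          exact mul_le_mul_of_nonneg_right h2 hX
  calc ‖B ψ‖ = Real.sqrt (‖B ψ‖ ^ 2) := (Real.sqrt_sq (norm_nonneg _)).symm
    _ ≤ Real.sqrt ((5 * ‖V‖ / m * ‖ψ‖) ^ 2) := Real.sqrt_le_sqrt hfinal
    _ = 5 * ‖V‖ / m * ‖ψ‖ := Real.sqrt_sq (by positivity)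
end

section
/- Let H₀(t) be the diagonal operator on ℓ²(ℤ) with (H₀(t)ψ)(m) = (m+t)²ψ(m), and n, l integers with 2n+l ≥ 1. For t ∈ I_l = [l/2-1/4, l/2+1/4), let R̂(t) be the reduced resolvent (H₀(t) - E_n(t))^{-1} P⊥ where P⊥ projects onto coordinates m ∉ {n, -n-l} and E_n(t) = (n+t)². Then the derivative in t satisfies: the kernel of a convolution operator V composed with dR̂/dt obeys |(V dR̂/dt)(i,j)| = |V̂(i-j)| · 2/(|j-n| (j+n+2t)²) for j ∉ {n, -n-l}, and ‖V dR̂/dt‖ ≤ C ‖V‖₀ / (2n+l) for a universal constant C, uniformly for t ∈ I_l. -/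
open scoped ENNReal

noncomputable section

namespace Stmt18Aux

abbrev H := lp (fun _ : ℤ => ℂ) 2

lemma two_pos' : (0:ℝ) < (2 : ℝ≥0∞).toReal := by norm_num

lemma summable_norm_sq (f : H) : Summable fun i : ℤ => ‖f i‖ ^ (2 : ℕ) := by
  have h := lp.memℓp f
  rw [memℓp_gen_iff two_pos'] at h
  refine h.congr fun i => ?_
  rw [show (2 : ℝ≥0∞).toReal = ((2:ℕ):ℝ) by norm_num, Real.rpow_natCast]

def evalCLM (i : ℤ) : H →L[ℂ] ℂ :=
  LinearMap.mkContinuous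
    { toFun := fun f => f i
      map_add' := fun f g => congr_fun (lp.coeFn_add f g) i
      map_smul' := fun c f => congr_fun (lp.coeFn_smul c f) i }
    1 (fun f => by simpa using lp.norm_apply_le_norm (by norm_num) f i)

@[simp] lemma evalCLM_apply (i : ℤ) (f : H) : evalCLM i f = f i := rfl

lemma memℓp_translate (V : H) (j : ℤ) : Memℓp (fun i => V (i - j)) 2 := by
  apply memℓp_gen
  have h := lp.memℓp V
  rw [memℓp_gen_iff two_pos'] at h
  have hinj : Function.Injective (fun i : ℤ => i - j) := fun a b hab => by simpa using hab
  exact h.comp_injective hinj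

def translate (V : H) (j : ℤ) : H := ⟨fun i => V (i - j), memℓp_translate V j⟩

@[simp] lemma translate_apply (V : H) (j i : ℤ) : translate V j i = V (i - j) := rfl

lemma norm_translate (V : H) (j : ℤ) : ‖translate V j‖ = ‖V‖ := by
  rw [lp.norm_eq_tsum_rpow two_pos', lp.norm_eq_tsum_rpow two_pos']
  congr 1
  exact (Equiv.subRight j).tsum_eq fun i => ‖V i‖ ^ (2 : ℝ≥0∞).toReal

lemma keybound {u a w m : ℝ} (hu1 : 1 ≤ |u|) (ha1 : 1 ≤ |a|) (hw : |a|/2 ≤ |w|)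
    (hma : a - u = m) (hm : 1 ≤ m) :
    (-2 / (u * w^2))^2 ≤ 256/m^2 * (1/u^2 + 1/a^2) := by
  have hune : u ≠ 0 := abs_pos.mp (by linarith)
  have hane : a ≠ 0 := abs_pos.mp (by linarith)
  have hwne : w ≠ 0 := abs_pos.mp (by linarith)
  have hm0 : (0:ℝ) < m := by linarith
  have hmne : m ≠ 0 := ne_of_gt hm0
  have hu2 : (1:ℝ) ≤ u^2 := by nlinarith [sq_abs u]
  have ha2 : (1:ℝ) ≤ a^2 := by nlinarith [sq_abs a]
  have habs : |a|/2 * (|a|/2) ≤ |w| * |w| :=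
    mul_le_mul hw hw (by positivity) (abs_nonneg w)
  have hw2 : a^2/4 ≤ w^2 := by nlinarith [habs, sq_abs w, sq_abs a]
  have hu0 : (0:ℝ) < u^2 := by positivity
  have hw0 : (0:ℝ) < w^2 := by positivity
  have hw4 : a^4/16 ≤ w^4 := by
    have h := mul_le_mul hw2 hw2 (by positivity : (0:ℝ) ≤ a^2/4) hw0.le
    nlinarith [h]
  have hsq : (-2 / (u * w^2))^2 = 4 / (u^2 * w^4) := by
    field_simp; ring
  have hmau : m ≤ |a| + |u| := by
    calc m = a - u := hma.symm
    _ ≤ |a - u| := le_abs_self _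
    _ ≤ |a| + |u| := by simpa [sub_eq_add_neg] using abs_add_le a (-u)
  rw [hsq]
  rcases le_or_gt (m/2) |u| with hcase | hcase
  · have h1 : m^2/4 ≤ u^2 := by nlinarith [sq_abs u]
    have h2 : a^2/16 ≤ w^4 := by nlinarith
    have hkey : m^2/4 * (a^2/16) ≤ u^2 * w^4 :=
      mul_le_mul h1 h2 (by positivity) (by positivity)
    have hstep : 4 / (u^2 * w^4) ≤ 4 / (m^2/4 * (a^2/16)) :=
      div_le_div_of_nonneg_left (by norm_num) (by positivity) hkey
    refine hstep.trans ?_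
    rw [show (4:ℝ) / (m^2/4 * (a^2/16)) = 256/m^2 * (1/a^2) by field_simp; ring]
    have hpos : (0:ℝ) ≤ 256/m^2 * (1/u^2) := by positivity
    rw [mul_add]; linarith
  · have haM : m/2 ≤ |a| := by linarith
    have h1 : m^2/4 ≤ a^2 := by nlinarith [sq_abs a]
    have ha4 : m^2/4 ≤ a^4 := by
      have h3 := mul_le_mul h1 ha2 (by norm_num) (by positivity : (0:ℝ) ≤ a^2)
      calc m^2/4 = m^2/4 * 1 := by ring
      _ ≤ a^2 * a^2 := h3
      _ = a^4 := by ring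
    have h2 : m^2/64 ≤ w^4 := by linarith
    have hkey : u^2 * (m^2/64) ≤ u^2 * w^4 :=
      mul_le_mul_of_nonneg_left h2 hu0.le
    have hstep : 4 / (u^2 * w^4) ≤ 4 / (u^2 * (m^2/64)) :=
      div_le_div_of_nonneg_left (by norm_num) (by positivity) hkey
    refine hstep.trans ?_
    rw [show (4:ℝ) / (u^2 * (m^2/64)) = 256/m^2 * (1/u^2) by field_simp; ring]
    have hpos : (0:ℝ) ≤ 256/m^2 * (1/a^2) := by positivity
    rw [mul_add]; linarith

/-- Cauchy–Schwarz for tsums. -/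
lemma cs {f g : ℤ → ℝ} (hf : ∀ i, 0 ≤ f i) (hg : ∀ i, 0 ≤ g i)
    (hf2 : Summable fun i => f i ^ (2 : ℕ)) (hg2 : Summable fun i => g i ^ (2 : ℕ)) :
    Summable (fun i => f i * g i) ∧
      ∑' i, f i * g i ≤
        (∑' i, f i ^ (2 : ℕ)) ^ ((1 : ℝ)/2) * (∑' i, g i ^ (2 : ℕ)) ^ ((1 : ℝ)/2) := by
  have hconj : (2 : ℝ).HolderConjugate 2 := Real.HolderConjugate.two_two
  have hpow : ∀ x : ℝ, x ^ (2 : ℝ) = x ^ (2 : ℕ) := fun x => by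
    rw [show (2:ℝ) = ((2:ℕ):ℝ) by norm_num, Real.rpow_natCast]
  have hf2' : Summable fun i => f i ^ (2 : ℝ) := hf2.congr fun i => (hpow _).symm
  have hg2' : Summable fun i => g i ^ (2 : ℝ) := hg2.congr fun i => (hpow _).symm
  have h := Real.summable_and_inner_le_Lp_mul_Lq_tsum_of_nonneg hconj hf hg hf2' hg2'
  refine ⟨h.1, h.2.trans (le_of_eq ?_)⟩
  congr 2 <;> exact tsum_congr fun i => hpow _

lemma rpow_two' (x : ℝ) : x ^ ((2 : ℝ≥0∞).toReal) = x ^ (2 : ℕ) := by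
  rw [show (2 : ℝ≥0∞).toReal = ((2:ℕ):ℝ) by norm_num, Real.rpow_natCast]

lemma norm_eq_sq (f : H) : ‖f‖ = (∑' i, ‖f i‖ ^ (2 : ℕ)) ^ ((1 : ℝ)/2) := by
  rw [lp.norm_eq_tsum_rpow two_pos' f,
    show (1:ℝ)/(2:ℝ≥0∞).toReal = 1/2 by norm_num]
  congr 1
  exact tsum_congr fun i => rpow_two' _



end Stmt18Aux

open Stmt18Aux

/-- There is a universal constant `C > 0` such that for integers `n, l` with
`2n+l ≥ 1`, `t ∈ I_l = [l/2-1/4, l/2+1/4)` and `V̂ ∈ ℓ²(ℤ)`, any bounded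
operator `B` on `ℓ²(ℤ)` with kernel `K(i,j) = -2 V̂(i-j)/((j-n)(j+n+2t)²)`
for `j ∉ {n, -n-l}` (and `0` otherwise) — i.e. the convolution by `V̂`
composed with `dR̂/dt` — satisfies the kernel modulus identity
`|K(i,j)| = |V̂(i-j)| · 2/(|j-n|(j+n+2t)²)` off `{n, -n-l}` and the bound
`‖B‖ ≤ C ‖V‖₀/(2n+l)`. -/
theorem stmt18 :
    ∃ C : ℝ, 0 < C ∧ ∀ n l : ℤ, 1 ≤ 2 * n + l →
      ∀ t : ℝ, (l : ℝ) / 2 - 1 / 4 ≤ t → t < (l : ℝ) / 2 + 1 / 4 →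
      ∀ V : lp (fun _ : ℤ => ℂ) 2,
      ∀ B : lp (fun _ : ℤ => ℂ) 2 →L[ℂ] lp (fun _ : ℤ => ℂ) 2,
        (∀ (ψ : lp (fun _ : ℤ => ℂ) 2) (i : ℤ),
          B ψ i = ∑' j : ℤ, (if j = n ∨ j = -n - l then (0 : ℂ)
            else ((-2 / (((j : ℝ) - n) * ((j : ℝ) + n + 2 * t) ^ 2)) : ℝ) •
              V (i - j)) * ψ j) →
        (∀ i j : ℤ, j ≠ n → j ≠ -n - l →
          ‖(((-2 / (((j : ℝ) - n) * ((j : ℝ) + n + 2 * t) ^ 2)) : ℝ) •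
              V (i - j))‖ =
            ‖V (i - j)‖ *
              (2 / (|(j : ℝ) - n| * ((j : ℝ) + n + 2 * t) ^ 2))) ∧
        ‖B‖ ≤ C * ‖V‖ / (2 * (n : ℝ) + l) := by
  classical
  set g : ℤ → ℝ := fun k => 1 / (k : ℝ) ^ 2 with hg_def
  have hgnn : ∀ k, 0 ≤ g k := fun k => by rw [hg_def]; positivity
  have hg : Summable g := by
    rw [hg_def]; exact Real.summable_one_div_int_pow.mpr one_lt_two
  set S₀ : ℝ := ∑' k, g k with hS₀_def
  have hS₀ : 1 ≤ S₀ := by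
    have h1 : g 1 = 1 := by rw [hg_def]; norm_num
    calc (1:ℝ) = g 1 := h1.symm
    _ ≤ S₀ := Summable.le_tsum hg 1 fun j _ => hgnn j
  refine ⟨Real.sqrt (512 * S₀), Real.sqrt_pos.mpr (by linarith), ?_⟩
  set C : ℝ := Real.sqrt (512 * S₀) with hC_def
  have hCsq : C ^ 2 = 512 * S₀ := Real.sq_sqrt (by linarith)
  have hC0 : 0 < C := Real.sqrt_pos.mpr (by linarith)
  intro n l hm t ht1 ht2 V B hB
  set mR : ℝ := ((2 * n + l : ℤ) : ℝ) with hmR_def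
  have hmR : 1 ≤ mR := by rw [hmR_def]; exact_mod_cast hm
  have hmR0 : 0 < mR := by linarith
  constructor
  · -- kernel modulus identity
    intro i j hjn hjl
    rw [norm_smul, Real.norm_eq_abs, mul_comm]
    congr 1
    rw [abs_div, abs_mul, abs_pow, sq_abs]
    norm_num
  · -- norm bound
    have hlow : ∀ j : ℤ, j ≠ -n - l →
        (1:ℝ) ≤ |(j:ℝ) + n + l| ∧ |(j:ℝ) + n + l| / 2 ≤ |(j:ℝ) + n + 2*t| := by
      intro j hj
      have h0 : j + n + l ≠ 0 := by omega
      have h1 : (1:ℝ) ≤ |(j:ℝ) + n + l| := by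
        have h2 : (1:ℤ) ≤ |j + n + l| := Int.one_le_abs h0
        calc (1:ℝ) ≤ ((|j + n + l| : ℤ) : ℝ) := by exact_mod_cast h2
        _ = |(j:ℝ) + n + l| := by push_cast; ring_nf
      have hd : |2*t - l| ≤ 1/2 := abs_le.mpr ⟨by linarith, by linarith⟩
      have htri : |(j:ℝ) + n + l| ≤ |(j:ℝ) + n + 2*t| + |2*t - l| := by
        calc |(j:ℝ) + n + l| = |((j:ℝ) + n + 2*t) + -(2*t - l)| := by congr 1; ring
        _ ≤ |(j:ℝ) + n + 2*t| + |-(2*t - l)| := abs_add_le _ _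
        _ = |(j:ℝ) + n + 2*t| + |2*t - l| := by rw [abs_neg]
      exact ⟨h1, by linarith⟩
    set b : ℤ → ℝ := fun j => if j = n ∨ j = -n - l then 0
      else -2 / (((j:ℝ) - n) * ((j:ℝ) + n + 2 * t) ^ 2) with hb_def
    have hb_sq : ∀ j : ℤ, b j ^ 2 ≤ 256 / mR ^ 2 * (g (j - n) + g (j + n + l)) := by
      intro j
      by_cases hc : j = n ∨ j = -n - l
      · have hbz : b j = 0 := by simp only [hb_def]; exact if_pos hc
        rw [hbz]
        have h1 := hgnn (j - n); have h2 := hgnn (j + n + l)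
        calc (0:ℝ)^2 = 0 := by norm_num
        _ ≤ _ := mul_nonneg (by positivity) (add_nonneg h1 h2)
      · push_neg at hc; obtain ⟨hjn, hjl⟩ := hc
        obtain ⟨ha1, hw⟩ := hlow j hjl
        have hu1 : (1:ℝ) ≤ |(j:ℝ) - n| := by
          have h0 : j - n ≠ 0 := by omega
          have h2 : (1:ℤ) ≤ |j - n| := Int.one_le_abs h0
          calc (1:ℝ) ≤ ((|j - n| : ℤ) : ℝ) := by exact_mod_cast h2
          _ = |(j:ℝ) - n| := by push_cast; ring_nf
        have hbj : b j = -2 / ((((j:ℝ) - n)) * (((j:ℝ) + n + 2*t))^2) := by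
          simp only [hb_def]; rw [if_neg (not_or.mpr ⟨hjn, hjl⟩)]
        have hma : ((j:ℝ) + n + l) - ((j:ℝ) - n) = mR := by
          rw [hmR_def]; push_cast; ring
        have hkb := keybound hu1 ha1 hw hma hmR
        have hga : g (j + n + l) = 1 / ((j:ℝ) + n + l)^2 := by
          simp only [hg_def]; push_cast; ring_nf
        have hgu : g (j - n) = 1 / ((j:ℝ) - n)^2 := by
          simp only [hg_def]; push_cast; ring_nf
        rw [hbj, hga, hgu]
        exact hkb
    have hsum1 : Summable fun j : ℤ => g (j - n) :=
      hg.comp_injective (fun x y hxy => by omega)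
    have hsum2 : Summable fun j : ℤ => g (j + n + l) :=
      hg.comp_injective (fun x y hxy => by omega)
    have hRHSsum : Summable fun j : ℤ => 256 / mR ^ 2 * (g (j - n) + g (j + n + l)) :=
      (hsum1.add hsum2).mul_left _
    have hbsq_summable : Summable fun j : ℤ => b j ^ 2 :=
      Summable.of_nonneg_of_le (fun j => sq_nonneg _) hb_sq hRHSsum
    have he1 : ∑' j : ℤ, g (j - n) = S₀ := (Equiv.subRight n).tsum_eq g
    have he2 : ∑' j : ℤ, g (j + n + l) = S₀ := by
      have h := (Equiv.addRight (n + l)).tsum_eq g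
      rw [hS₀_def, ← h]
      exact tsum_congr fun j =>
        congrArg g (by simp only [Equiv.coe_addRight]; omega)
    have hSb : ∑' j : ℤ, b j ^ 2 ≤ (C / mR) ^ 2 := by
      have hstep := Summable.tsum_le_tsum hb_sq hbsq_summable hRHSsum
      have hrhs : ∑' j : ℤ, 256 / mR ^ 2 * (g (j - n) + g (j + n + l))
          = 256 / mR ^ 2 * (S₀ + S₀) := by
        rw [tsum_mul_left, Summable.tsum_add hsum1 hsum2, he1, he2]
      have hCm : (C / mR) ^ 2 = 512 * S₀ / mR ^ 2 := by
        rw [div_pow, hCsq]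
      rw [hCm]
      calc ∑' j : ℤ, b j ^ 2 ≤ 256 / mR ^ 2 * (S₀ + S₀) := hrhs ▸ hstep
      _ = 512 * S₀ / mR ^ 2 := by ring
    have hbhalf : (∑' j : ℤ, b j ^ 2) ^ ((1:ℝ)/2) ≤ C / mR := by
      have hnn : (0:ℝ) ≤ ∑' j : ℤ, b j ^ 2 := tsum_nonneg fun j => sq_nonneg _
      calc (∑' j : ℤ, b j ^ 2) ^ ((1:ℝ)/2) ≤ ((C / mR) ^ 2) ^ ((1:ℝ)/2) :=
        Real.rpow_le_rpow hnn hSb (by norm_num)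
      _ = C / mR := by
        have h0 : (0:ℝ) ≤ C / mR := le_of_lt (div_pos hC0 hmR0)
        rw [← Real.rpow_natCast (C/mR) 2, ← Real.rpow_mul h0,
          show ((2:ℕ):ℝ) * ((1:ℝ)/2) = 1 by norm_num, Real.rpow_one]
    have h2nl : (2 * (n:ℝ) + l) = mR := by rw [hmR_def]; push_cast; ring
    refine ContinuousLinearMap.opNorm_le_bound B
      (by rw [h2nl]; exact div_nonneg (mul_nonneg hC0.le (norm_nonneg V)) hmR0.le) ?_
    intro ψ
    rw [h2nl]
    set F : ℤ → Stmt18Aux.H := fun j => (((b j : ℝ) : ℂ) * ψ j) • translate V j with hF_def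
    have hFnorm : ∀ j, ‖F j‖ = |b j| * ‖ψ j‖ * ‖V‖ := by
      intro j
      simp only [hF_def]
      rw [norm_smul, norm_mul, norm_translate, Complex.norm_real, Real.norm_eq_abs]
    have hcs := cs (f := fun j => |b j|) (g := fun j => ‖ψ j‖)
      (fun j => abs_nonneg _) (fun j => norm_nonneg _)
      (by simpa [sq_abs] using hbsq_summable) (summable_norm_sq ψ)
    have hsummul : Summable fun j : ℤ => |b j| * ‖ψ j‖ := hcs.1
    have hFsummable : Summable F := by
      apply Summable.of_norm
      exact (hsummul.mul_right ‖V‖).congr fun j => (hFnorm j).symm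
    have hrepr : B ψ = ∑' j, F j := by
      apply lp.ext
      funext i
      have h1 : B ψ i = ∑' j, (F j) i := by
        rw [hB ψ i]
        refine tsum_congr fun j => ?_
        simp only [hF_def]
        by_cases hc : j = n ∨ j = -n - l
        · have hbz : b j = 0 := by simp only [hb_def]; exact if_pos hc
          rw [if_pos hc, hbz]
          simp
        · have hbj : b j = -2 / ((((j:ℝ) - n)) * (((j:ℝ) + n + 2*t))^2) := by
            simp only [hb_def]; rw [if_neg hc]
          rw [if_neg hc, ← hbj]
          simp only [lp.coeFn_smul, Pi.smul_apply, Stmt18Aux.translate_apply,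
            smul_eq_mul, Complex.real_smul]
          ring
      have h2 : (∑' j, F j) i = ∑' j, (F j) i := by
        simpa using (evalCLM i).map_tsum hFsummable
      exact h1.trans h2.symm
    rw [hrepr]
    have hnormsum : Summable fun j : ℤ => ‖F j‖ :=
      (hsummul.mul_right ‖V‖).congr fun j => (hFnorm j).symm
    calc ‖∑' j, F j‖ ≤ ∑' j, ‖F j‖ := norm_tsum_le_tsum_norm hnormsum
    _ = (∑' j : ℤ, |b j| * ‖ψ j‖) * ‖V‖ := by
      rw [← tsum_mul_right]; exact tsum_congr fun j => hFnorm j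
    _ ≤ ((∑' j : ℤ, |b j| ^ (2:ℕ)) ^ ((1:ℝ)/2) * (∑' j : ℤ, ‖ψ j‖ ^ (2:ℕ)) ^ ((1:ℝ)/2)) * ‖V‖ :=
      mul_le_mul_of_nonneg_right hcs.2 (norm_nonneg V)
    _ = (∑' j : ℤ, b j ^ 2) ^ ((1:ℝ)/2) * ‖ψ‖ * ‖V‖ := by
      have habs2 : ∑' j : ℤ, |b j| ^ (2:ℕ) = ∑' j : ℤ, b j ^ 2 :=
        tsum_congr fun j => sq_abs (b j)
      rw [habs2, ← norm_eq_sq ψ]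
    _ ≤ (C / mR) * ‖ψ‖ * ‖V‖ := by
      have := mul_le_mul_of_nonneg_right
        (mul_le_mul_of_nonneg_right hbhalf (norm_nonneg ψ)) (norm_nonneg V)
      exact this
    _ = C * ‖V‖ / mR * ‖ψ‖ := by ring
end
end
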